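/- arXiv:1005.5040 — 3 statements merged into one kernel-verified Lean document; each statement's English description precedes it below -/
import Mathlib

section
/- Let h ≠ 0 be real and let x₁, x₂ be real. Then for all real y one has exp_h(x₁ ⊕^h x₂, y) = exp_h(x₁, y) · exp_h(x₂, y), where x₁ ⊕^h x₂ = x₁·√(1+h²x₂²) + x₂·√(1+h²x₁²). -/
/-!
With `a = arsinh (h * x)` the base `h * x + √(1 + h² x²)` is `exp a`, so `exp_h(x, y) = exp (y / h * a)`.
Since `√(1 + h² x²) = cosh a`, the addition formula for `sinh` shows that `h * (x₁ ⊕^h x₂)` is the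
`sinh` of `arsinh (h * x₁) + arsinh (h * x₂)`: the deformed sum is ordinary addition transported by
`x ↦ arsinh (h * x)`, which turns the claim into `exp (u + v) = exp u * exp v`.
-/

open Real

namespace Kaniadakis

noncomputable def deformedExp (h x y : ℝ) : ℝ := (h * x + √(1 + h ^ 2 * x ^ 2)) ^ (y / h)

noncomputable def deformedSum (h x₁ x₂ : ℝ) : ℝ :=
  x₁ * √(1 + h ^ 2 * x₂ ^ 2) + x₂ * √(1 + h ^ 2 * x₁ ^ 2)

theorem sqrt_one_add_sq_mul_sq (h x : ℝ) : √(1 + h ^ 2 * x ^ 2) = cosh (arsinh (h * x)) := by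
  rw [cosh_arsinh, mul_pow]

theorem deformedExp_eq_exp_arsinh (h x y : ℝ) :
    deformedExp h x y = exp (y / h * arsinh (h * x)) := by
  rw [deformedExp, ← mul_pow, ← exp_arsinh, ← exp_mul, mul_comm]

theorem arsinh_mul_deformedSum (h x₁ x₂ : ℝ) :
    arsinh (h * deformedSum h x₁ x₂) = arsinh (h * x₁) + arsinh (h * x₂) := by
  have hsinh : h * deformedSum h x₁ x₂ = sinh (arsinh (h * x₁) + arsinh (h * x₂)) := by
    rw [sinh_add, sinh_arsinh, sinh_arsinh, deformedSum, sqrt_one_add_sq_mul_sq,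
      sqrt_one_add_sq_mul_sq]
    ring
  rw [hsinh, arsinh_sinh]

theorem deformedExp_deformedSum (h x₁ x₂ y : ℝ) :
    deformedExp h (deformedSum h x₁ x₂) y = deformedExp h x₁ y * deformedExp h x₂ y := by
  simp only [deformedExp_eq_exp_arsinh, arsinh_mul_deformedSum, mul_add, exp_add]

end Kaniadakis

theorem kaniadakis_exp_oplus_general (h x₁ x₂ : ℝ) :
    ∀ y : ℝ,
      (h * (x₁ * Real.sqrt (1 + h ^ 2 * x₂ ^ 2) + x₂ * Real.sqrt (1 + h ^ 2 * x₁ ^ 2)) +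
          Real.sqrt (1 + h ^ 2 *
            (x₁ * Real.sqrt (1 + h ^ 2 * x₂ ^ 2) + x₂ * Real.sqrt (1 + h ^ 2 * x₁ ^ 2)) ^ 2))
        ^ (y / h) =
      (h * x₁ + Real.sqrt (1 + h ^ 2 * x₁ ^ 2)) ^ (y / h) *
        (h * x₂ + Real.sqrt (1 + h ^ 2 * x₂ ^ 2)) ^ (y / h) :=
  Kaniadakis.deformedExp_deformedSum h x₁ x₂

/-- `exp_h(x₁ ⊕^h x₂, y) = exp_h(x₁,y) · exp_h(x₂,y)` with
`x₁ ⊕^h x₂ = x₁·√(1+h²x₂²) + x₂·√(1+h²x₁²)`. -/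
theorem kaniadakis_exp_oplus (h x₁ x₂ : ℝ) (hh : h ≠ 0) :
    ∀ y : ℝ,
      (h * (x₁ * Real.sqrt (1 + h ^ 2 * x₂ ^ 2) + x₂ * Real.sqrt (1 + h ^ 2 * x₁ ^ 2)) +
          Real.sqrt (1 + h ^ 2 *
            (x₁ * Real.sqrt (1 + h ^ 2 * x₂ ^ 2) + x₂ * Real.sqrt (1 + h ^ 2 * x₁ ^ 2)) ^ 2))
        ^ (y / h) =
      (h * x₁ + Real.sqrt (1 + h ^ 2 * x₁ ^ 2)) ^ (y / h) *
        (h * x₂ + Real.sqrt (1 + h ^ 2 * x₂ ^ 2)) ^ (y / h) :=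
  kaniadakis_exp_oplus_general h x₁ x₂
end

section
/- Let h ≠ 0 be real, y real, and x real with |hx| < 1. Then the series ∑_{n=0}^∞ (xⁿ/n!)·y^{⟨n,h⟩} converges and exp_h(x,y) = (hx + √(1+h²x²))^{y/h} = ∑_{n=0}^∞ (xⁿ/n!)·y^{⟨n,h⟩}, where the central generalized power is defined by y^{⟨0,h⟩} = 1, y^{⟨2m,h⟩} = ∏_{k=0}^{m−1}(y − 2kh)(y + 2kh) for m ∈ ℕ, and y^{⟨2m+1,h⟩} = y·∏_{k=0}^{m−1}(y − (2k+1)h)(y + (2k+1)h) for m ∈ ℕ₀. -/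
/-!
With `w = h x` and `a = y / h`, the `n`-th term is `c n * w ^ n` for
`c n = y^{⟨n,h⟩} / (hⁿ n!)`, and `(h x + √(1 + h²x²))^(y/h) = exp (a * arsinh w)`.
The coefficients satisfy `c 0 = 1`, `c 1 = a` and `(n+1)(n+2) c (n+2) = (a² - n²) c n`.
This recurrence makes `|c n|` eventually non-increasing, so `g w = ∑ c n wⁿ` converges on
`|w| < 1` and can be differentiated termwise, and it says precisely that
`(1 + w²) g'' + w g' = a² g`. In the variable `w = sinh t` this becomes `ψ'' = a² ψ` with
`ψ 0 = 1`, `ψ' 0 = a`, whose only solution is `exp (a t)`.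
-/

/-- The central generalized power `y^{⟨n,h⟩}`: `y^{⟨0,h⟩} = 1`,
`y^{⟨2m,h⟩} = ∏_{k<m} (y−2kh)(y+2kh)` and
`y^{⟨2m+1,h⟩} = y·∏_{k<m} (y−(2k+1)h)(y+(2k+1)h)`. -/
noncomputable def centralPow (y h : ℝ) (n : ℕ) : ℝ :=
  if n % 2 = 0 then
    ∏ k ∈ Finset.range (n / 2), ((y - 2 * k * h) * (y + 2 * k * h))
  else
    y * ∏ k ∈ Finset.range (n / 2), ((y - (2 * k + 1) * h) * (y + (2 * k + 1) * h))

open Real Finset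

lemma succ_mul_pow_mul_sub_le {r s : ℝ} (hr : 0 ≤ r) (hrs : r ≤ s) (n : ℕ) :
    (n + 1) * r ^ n * (s - r) ≤ s ^ (n + 1) := by
  suffices r ^ (n + 1) + (n + 1) * r ^ n * (s - r) ≤ s ^ (n + 1) by
    linarith [pow_nonneg hr (n + 1)]
  induction n with
  | zero => simp
  | succ n ih =>
    have hrn : 0 ≤ r ^ n * (s - r) := mul_nonneg (pow_nonneg hr n) (sub_nonneg.2 hrs)
    calc r ^ (n + 2) + (↑(n + 1) + 1) * r ^ (n + 1) * (s - r)
        ≤ s * (r ^ (n + 1) + (n + 1) * r ^ n * (s - r)) := by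
          push_cast; ring_nf; nlinarith [mul_le_mul_of_nonneg_left hrs hrn]
      _ ≤ s ^ (n + 2) := by rw [pow_succ' s (n + 1)]; gcongr; exact hr.trans hrs

def derivCoeff (c : ℕ → ℝ) (n : ℕ) : ℝ := (n + 1) * c (n + 1)

section PowerSeries

variable {c : ℕ → ℝ}

lemma norm_derivCoeff_mul_pow_le {t ρ s : ℝ} (ht : |t| ≤ ρ) (hρs : ρ < s) (n : ℕ) :
    ‖derivCoeff c n * t ^ n‖ ≤ (s - ρ)⁻¹ * |c (n + 1) * s ^ (n + 1)| := by
  have hρ : 0 ≤ ρ := (abs_nonneg t).trans ht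
  have hs : 0 ≤ s := hρ.trans hρs.le
  have key : (n + 1) * |t| ^ n ≤ (s - ρ)⁻¹ * s ^ (n + 1) := by
    rw [le_inv_mul_iff₀ (sub_pos.2 hρs)]
    calc (s - ρ) * ((n + 1) * |t| ^ n) ≤ (n + 1) * ρ ^ n * (s - ρ) := by
          rw [mul_comm, mul_assoc, mul_assoc]
          gcongr
      _ ≤ s ^ (n + 1) := succ_mul_pow_mul_sub_le hρ hρs.le n
  rw [Real.norm_eq_abs, derivCoeff, abs_mul, abs_mul, abs_mul, abs_pow, abs_pow, abs_of_nonneg hs]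
  rw [abs_of_nonneg (by positivity : (0 : ℝ) ≤ n + 1)]
  calc (n + 1) * |c (n + 1)| * |t| ^ n = |c (n + 1)| * ((n + 1) * |t| ^ n) := by ring
    _ ≤ |c (n + 1)| * ((s - ρ)⁻¹ * s ^ (n + 1)) := by gcongr
    _ = _ := by ring

variable (hc : ∀ r : ℝ, |r| < 1 → Summable fun n => c n * r ^ n)
include hc

lemma summable_derivCoeff_mul_pow :
    ∀ r : ℝ, |r| < 1 → Summable fun n => derivCoeff c n * r ^ n := by
  intro r hr
  obtain ⟨s, hrs, hs1⟩ := exists_between hr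
  have hs : |s| < 1 := by rwa [abs_of_pos ((abs_nonneg r).trans_lt hrs)]
  exact .of_norm_bounded (((summable_nat_add_iff 1).2 (hc s hs)).abs.mul_left _)
    (norm_derivCoeff_mul_pow_le le_rfl hrs)

lemma hasDerivAt_tsum_mul_pow {w : ℝ} (hw : |w| < 1) :
    HasDerivAt (fun t => ∑' n, c n * t ^ n) (∑' n, derivCoeff c n * w ^ n) w := by
  obtain ⟨ρ, hwρ, hρ1⟩ := exists_between hw
  obtain ⟨s, hρs, hs1⟩ := exists_between hρ1
  have hρ : 0 < ρ := (abs_nonneg w).trans_lt hwρ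
  have hs : |s| < 1 := by rwa [abs_of_pos (hρ.trans hρs)]
  have hshift (t : ℝ) (n : ℕ) :
      c (n + 1) * (↑(n + 1) * t ^ (n + 1 - 1)) = derivCoeff c n * t ^ n := by
    simp only [derivCoeff, Nat.add_sub_cancel, Nat.cast_succ]; ring
  have hderiv := hasDerivAt_tsum_of_isPreconnected (g := fun n t => c n * t ^ n)
    (g' := fun n t => c n * (n * t ^ (n - 1))) ((hc s hs).abs.mul_left (s - ρ)⁻¹)
    Metric.isOpen_ball (convex_ball 0 ρ).isPreconnected
    (fun n t _ => (hasDerivAt_pow n t).const_mul (c n)) (fun n t ht => ?_)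
    (Metric.mem_ball_self hρ) (hc 0 (by simp))
    (mem_ball_zero_iff.2 hwρ)
  · rw [tsum_eq_zero_add'
      (by simpa only [hshift] using summable_derivCoeff_mul_pow hc w hw)] at hderiv
    simpa only [CharP.cast_eq_zero, zero_mul, mul_zero, zero_add, hshift] using hderiv
  · rcases n with _ | n
    · simp only [CharP.cast_eq_zero, zero_mul, mul_zero, norm_zero]
      positivity
    · have ht' : |t| ≤ ρ := by simpa using (Metric.mem_ball.1 ht).le
      simpa only [hshift] using norm_derivCoeff_mul_pow_le ht' hρs n

end PowerSeries

lemma exists_abs_le_of_abs_add_two_le {c : ℕ → ℝ} {N : ℕ}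
    (h : ∀ n ≥ N, |c (n + 2)| ≤ |c n|) :
    ∃ M, ∀ n, |c n| ≤ M := by
  refine ⟨∑ k ∈ range (N + 2), |c k|, fun n => ?_⟩
  induction n using Nat.strong_induction_on with
  | _ n ih =>
    by_cases hn : n < N + 2
    · exact single_le_sum (fun k _ => abs_nonneg (c k)) (mem_range.2 hn)
    · obtain ⟨m, rfl⟩ : ∃ m, n = m + 2 := ⟨n - 2, by omega⟩
      exact (h m (by omega)).trans (ih m (by omega))

lemma summable_mul_pow_of_abs_le {c : ℕ → ℝ} {M : ℝ} (hM : ∀ n, |c n| ≤ M) {r : ℝ}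
    (hr : |r| < 1) :
    Summable fun n => c n * r ^ n :=
  .of_norm_bounded ((summable_geometric_of_abs_lt_one hr).abs.mul_left M) fun n => by
    rw [Real.norm_eq_abs, abs_mul]
    exact mul_le_mul_of_nonneg_right (hM n) (abs_nonneg _)

section Recurrence

variable {a : ℝ} {c : ℕ → ℝ}
  (hrec : ∀ n : ℕ, (n + 1) * (n + 2) * c (n + 2) = (a ^ 2 - n ^ 2) * c n)
include hrec

lemma abs_add_two_le_of_recurrence {n : ℕ} (hn : a ^ 2 ≤ n) : |c (n + 2)| ≤ |c n| := by
  have hpos : (0 : ℝ) < (n + 1) * (n + 2) := by positivity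
  have hle : |a ^ 2 - n ^ 2| ≤ (n + 1) * (n + 2) := by
    rw [abs_le]; constructor <;> nlinarith [sq_nonneg a]
  have := congrArg abs (hrec n)
  rw [abs_mul, abs_mul _ (c n), abs_of_pos hpos] at this
  nlinarith [abs_nonneg (c n), abs_nonneg (c (n + 2))]

lemma summable_mul_pow_of_recurrence : ∀ r : ℝ, |r| < 1 → Summable fun n => c n * r ^ n := by
  obtain ⟨M, hM⟩ := exists_abs_le_of_abs_add_two_le (N := ⌈a ^ 2⌉₊)
    fun n hn => abs_add_two_le_of_recurrence hrec ((Nat.le_ceil _).trans (by exact_mod_cast hn))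
  exact fun r hr => summable_mul_pow_of_abs_le hM hr

lemma tsum_mul_pow_ode_of_recurrence {w : ℝ} (hw : |w| < 1) :
    (1 + w ^ 2) * ∑' n, derivCoeff (derivCoeff c) n * w ^ n + w * ∑' n, derivCoeff c n * w ^ n =
      a ^ 2 * ∑' n, c n * w ^ n := by
  have hc := summable_mul_pow_of_recurrence hrec
  have hc' := summable_derivCoeff_mul_pow hc
  have h2 := (summable_derivCoeff_mul_pow hc' w hw).hasSum
  have hfirst : HasSum (fun n : ℕ => n * c n * w ^ n) (w * ∑' n, derivCoeff c n * w ^ n) := by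
    rw [← hasSum_nat_add_iff' 1]
    simp only [range_one, sum_singleton, Nat.cast_zero, zero_mul, sub_zero]
    exact ((hc' w hw).hasSum.mul_left w).congr_fun fun n => by
      simp only [derivCoeff]; push_cast; ring
  have hsecond : HasSum (fun n : ℕ => n * (n - 1) * c n * w ^ n)
      (w ^ 2 * ∑' n, derivCoeff (derivCoeff c) n * w ^ n) := by
    rw [← hasSum_nat_add_iff' 2]
    simp only [sum_range_succ, range_zero, sum_empty, Nat.cast_zero, Nat.cast_one, zero_mul,
      sub_self, mul_zero, zero_add, sub_zero]
    exact (h2.mul_left (w ^ 2)).congr_fun fun n => by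
      simp only [derivCoeff]; push_cast; ring
  have hthird : HasSum (fun n : ℕ => (a ^ 2 - n ^ 2) * c n * w ^ n)
      (∑' n, derivCoeff (derivCoeff c) n * w ^ n) :=
    h2.congr_fun fun n => by rw [← hrec n, derivCoeff, derivCoeff]; push_cast; ring
  have hsum := ((hthird.add hsecond).add hfirst).unique
    (((hc w hw).hasSum.mul_left (a ^ 2)).congr_fun fun n => by ring)
  linear_combination hsum

end Recurrence

lemma eq_exp_mul_of_hasDerivAt {a : ℝ} {ψ φ : ℝ → ℝ} {J : Set ℝ} (hJ : IsOpen J)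
    (hJc : IsPreconnected J) (h0 : 0 ∈ J) (hψ : ∀ t ∈ J, HasDerivAt ψ (φ t) t)
    (hφ : ∀ t ∈ J, HasDerivAt φ (a ^ 2 * ψ t) t) (hψ0 : ψ 0 = 1) (hφ0 : φ 0 = a)
    {t : ℝ} (ht : t ∈ J) : ψ t = exp (a * t) := by
  have hexp (b s : ℝ) : HasDerivAt (fun t => exp (b * t)) (exp (b * s) * b) s := by
    simpa using ((hasDerivAt_id s).const_mul b).exp
  have hconst (f : ℝ → ℝ) (hf : ∀ s ∈ J, HasDerivAt f 0 s) {s : ℝ} (hs : s ∈ J) :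
      f s = f 0 :=
    hJ.is_const_of_deriv_eq_zero hJc
      (fun s hs => (hf s hs).differentiableAt.differentiableWithinAt)
      (fun s hs => (hf s hs).deriv) hs h0
  -- `φ + a ψ` solves `u' = a u`, and then `(exp (a t) ψ - exp (2 a t))' = 0`.
  have hfirst {s : ℝ} (hs : s ∈ J) : φ s + a * ψ s = 2 * a * exp (a * s) := by
    have := hconst (fun t => exp (-a * t) * (φ t + a * ψ t)) (fun s hs => ?_) hs
    · simp only [mul_zero, exp_zero, hφ0, hψ0, one_mul, mul_one, neg_mul, exp_neg] at this
      field_simp at this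
      linear_combination this
    · exact ((hexp (-a) s).mul ((hφ s hs).add ((hψ s hs).const_mul a))).congr_deriv
        (by simp only [Pi.add_apply]; ring)
  have hsecond :=
    hconst (fun t => exp (a * t) * ψ t - exp (a * t) * exp (a * t)) (fun s hs => ?_) ht
  · simp only [mul_zero, exp_zero, hψ0, mul_one, sub_self] at hsecond
    exact mul_left_cancel₀ (exp_pos (a * t)).ne' (sub_eq_zero.1 hsecond)
  · exact (((hexp a s).mul (hψ s hs)).sub ((hexp a s).mul (hexp a s))).congr_deriv
      (by linear_combination exp (a * s) * hfirst hs)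

lemma hasDerivAt_tsum_mul_sinh_pow {c : ℕ → ℝ}
    (hc : ∀ r : ℝ, |r| < 1 → Summable fun n => c n * r ^ n) {t : ℝ} (ht : |sinh t| < 1) :
    HasDerivAt (fun t => ∑' n, c n * sinh t ^ n)
      (cosh t * ∑' n, derivCoeff c n * sinh t ^ n) t :=
  ((hasDerivAt_tsum_mul_pow hc ht).comp t (hasDerivAt_sinh t)).congr_deriv (mul_comm _ _)

lemma abs_sinh_lt_iff (t r : ℝ) : |sinh t| < r ↔ |t| < arsinh r := by
  rw [abs_sinh, ← sinh_lt_sinh (x := |t|) (y := arsinh r), sinh_arsinh]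

theorem hasSum_mul_pow_exp_mul_arsinh {a : ℝ} {c : ℕ → ℝ} (hc0 : c 0 = 1) (hc1 : c 1 = a)
    (hrec : ∀ n : ℕ, (n + 1) * (n + 2) * c (n + 2) = (a ^ 2 - n ^ 2) * c n) {w : ℝ}
    (hw : |w| < 1) :
    HasSum (fun n => c n * w ^ n) (exp (a * arsinh w)) := by
  have hc := summable_mul_pow_of_recurrence hrec
  have hJ {t : ℝ} (ht : t ∈ Metric.ball 0 (arsinh 1)) : |sinh t| < 1 := by
    rwa [abs_sinh_lt_iff, ← Real.norm_eq_abs, ← mem_ball_zero_iff]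
  have hψ := eq_exp_mul_of_hasDerivAt (a := a) Metric.isOpen_ball (convex_ball _ _).isPreconnected
    (Metric.mem_ball_self (arsinh_pos_iff.2 one_pos))
    (fun t ht => hasDerivAt_tsum_mul_sinh_pow hc (hJ ht)) (fun t ht => ?_) ?_ ?_
    (t := arsinh w) (by rwa [mem_ball_zero_iff, Real.norm_eq_abs, ← abs_sinh_lt_iff, sinh_arsinh])
  · rw [sinh_arsinh] at hψ
    exact hψ ▸ (hc w hw).hasSum
  · refine ((hasDerivAt_cosh t).mul
      (hasDerivAt_tsum_mul_sinh_pow (summable_derivCoeff_mul_pow hc) (hJ ht))).congr_deriv ?_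
    linear_combination tsum_mul_pow_ode_of_recurrence hrec (hJ ht) +
      (∑' n, derivCoeff (derivCoeff c) n * sinh t ^ n) * cosh_sq t
  · simp [zero_pow_eq, hc0]
  · simp [zero_pow_eq, hc1, derivCoeff]

lemma centralPow_add_two (y h : ℝ) (n : ℕ) :
    centralPow y h (n + 2) = centralPow y h n * ((y - n * h) * (y + n * h)) := by
  rcases Nat.even_or_odd' n with ⟨m, rfl | rfl⟩
  · have h1 : (2 * m + 2) % 2 = 0 := by omega
    have h2 : (2 * m + 2) / 2 = m + 1 := by omega
    simp only [centralPow, h1, h2, Nat.mul_mod_right, Nat.mul_div_cancel_left m two_pos, if_true,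
      prod_range_succ]
    push_cast; ring
  · have h1 : (2 * m + 1 + 2) % 2 = 1 := by omega
    have h2 : (2 * m + 1 + 2) / 2 = m + 1 := by omega
    have h3 : (2 * m + 1) % 2 = 1 := by omega
    have h4 : (2 * m + 1) / 2 = m := by omega
    simp only [centralPow, h1, h2, h3, h4, one_ne_zero, if_false, prod_range_succ]
    push_cast; ring

lemma centralPow_div_recurrence {h : ℝ} (hh : h ≠ 0) (y : ℝ) (n : ℕ) :
    (n + 1) * (n + 2) * (centralPow y h (n + 2) / (h ^ (n + 2) * (n + 2).factorial)) =
      ((y / h) ^ 2 - n ^ 2) * (centralPow y h n / (h ^ n * n.factorial)) := by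
  rw [centralPow_add_two, Nat.factorial_succ, Nat.factorial_succ]
  push_cast
  field_simp
  ring

/-- for `|hx| < 1`, `exp_h(x,y) = (hx+√(1+h²x²))^(y/h)` is the
sum of the series `∑ xⁿ/n! · y^{⟨n,h⟩}`. -/
theorem kaniadakis_exp_series (h x y : ℝ) (hh : h ≠ 0) (hx : |h * x| < 1) :
    HasSum (fun n : ℕ => x ^ n / n.factorial * centralPow y h n)
      ((h * x + Real.sqrt (1 + h ^ 2 * x ^ 2)) ^ (y / h)) := by
  have hterm (n : ℕ) : x ^ n / n.factorial * centralPow y h n =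
      centralPow y h n / (h ^ n * n.factorial) * (h * x) ^ n := by
    field_simp
    ring
  rw [show 1 + h ^ 2 * x ^ 2 = 1 + (h * x) ^ 2 by ring, ← exp_arsinh, ← exp_mul, mul_comm]
  refine HasSum.congr_fun ?_ hterm
  exact hasSum_mul_pow_exp_mul_arsinh (by simp [centralPow]) (by simp [centralPow])
    (centralPow_div_recurrence hh y) hx
end

section
/- Let h ≠ 0 be real, y real, and x real. Then the function x ↦ exp_h(x,y) is differentiable at x and satisfies √(1+h²x²)·(∂/∂x) exp_h(x,y) = y · exp_h(x,y); that is, exp_h(·,y) is an eigenfunction of the deformed derivative d/d^h x = √(1+h²x²)·d/dx with eigenvalue y. -/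
/-! The base `h x + √(1 + h²x²)` is `exp (arsinh (h x))`, so `exp_h(x, y) = exp ((y / h) · arsinh (h x))`.
Since `arsinh' u = 1 / √(1 + u²)`, differentiating brings down exactly the factor
`(y / h) · h / √(1 + h²x²) = y / √(1 + h²x²)`. -/

open Real

theorem add_sqrt_one_add_sq_rpow (u p : ℝ) : (u + √(1 + u ^ 2)) ^ p = exp (p * arsinh u) := by
  rw [← exp_arsinh u, ← exp_mul, mul_comm]

theorem hasDerivAt_exp_mul_arsinh_mul (c h x : ℝ) :
    HasDerivAt (fun t => exp (c * arsinh (h * t)))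
      (c * h * exp (c * arsinh (h * x)) / √(1 + (h * x) ^ 2)) x := by
  convert ((((hasDerivAt_id' x).const_mul h).arsinh).const_mul c).exp using 1
  simp only [smul_eq_mul]
  ring

/-- `x ↦ exp_h(x,y)` is differentiable at every real `x` and is
an eigenfunction of the deformed derivative `√(1+h²x²)·d/dx` with
eigenvalue `y`. -/
theorem kaniadakis_exp_h_derivative (h y x : ℝ) (hh : h ≠ 0) :
    DifferentiableAt ℝ
        (fun t : ℝ => (h * t + Real.sqrt (1 + h ^ 2 * t ^ 2)) ^ (y / h)) x ∧
      Real.sqrt (1 + h ^ 2 * x ^ 2) *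
          deriv (fun t : ℝ => (h * t + Real.sqrt (1 + h ^ 2 * t ^ 2)) ^ (y / h)) x =
        y * (h * x + Real.sqrt (1 + h ^ 2 * x ^ 2)) ^ (y / h) := by
  have hexp : (fun t : ℝ => (h * t + √(1 + h ^ 2 * t ^ 2)) ^ (y / h)) =
      fun t => exp (y / h * arsinh (h * t)) := by
    funext t
    rw [← mul_pow, add_sqrt_one_add_sq_rpow]
  have hderiv := hasDerivAt_exp_mul_arsinh_mul (y / h) h x
  rw [hexp, ← mul_pow, add_sqrt_one_add_sq_rpow]
  refine ⟨hderiv.differentiableAt, ?_⟩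
  have hsqrt : 0 < √(1 + (h * x) ^ 2) := sqrt_pos.2 (by positivity)
  rw [hderiv.deriv]
  field_simp
end
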